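/- (Classical bound transfer.) If B ∈ ℝ is such that I(m_a, b) ≤ B for every a : X → ZMod d and every b : Y → ZMod d (i.e., B is a bound on all linear strategies, corresponding to the classical bound of the associated Bell inequality), then I(m, b) ≤ B for every message function m : ZMod d × X → ZMod d and every b : Y → ZMod d. -/

import Mathlib

/-!
Subtracting `x0` from both sides of the winning condition `m (x0, x) + b y = x0 + F` shows
that the `x0`-slice of the payoff of `m` is the payoff of the linear strategy with
`a = m (x0, ·) - x0`. Hence the payoff of `m` is an average over `x0` of payoffs of linear
strategies, each at most `B`.
-/

open Finset

/-- The average payoff of a classical strategy `(m, b)` in the communication complexity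
game determined by input weights `p`, payoff coefficients `c` and target functions `F`. -/
noncomputable def payoff (d : ℕ) [NeZero d] {X Y J : Type} [Fintype X] [Fintype Y] [Fintype J]
    (p : X × Y → ℝ) (c : J × X × Y → ℝ) (F : J × X × Y → ZMod d)
    (m : ZMod d × X → ZMod d) (b : Y → ZMod d) : ℝ :=
  (1 / (d : ℝ)) * ∑ x0 : ZMod d, ∑ xy : X × Y, p xy * ∑ j : J,
    c (j, xy.1, xy.2) *
      (if m (x0, xy.1) + b xy.2 = x0 + F (j, xy.1, xy.2) then (1 : ℝ) else 0)

open scoped BigOperators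

section

variable {d : ℕ} [NeZero d] {X Y J : Type} [Fintype X] [Fintype Y] [Fintype J]
  (p : X × Y → ℝ) (c : J × X × Y → ℝ) (F : J × X × Y → ZMod d)

noncomputable def linearPayoff (a : X → ZMod d) (b : Y → ZMod d) : ℝ :=
  ∑ xy : X × Y, p xy * ∑ j : J,
    c (j, xy.1, xy.2) * (if a xy.1 + b xy.2 = F (j, xy.1, xy.2) then (1 : ℝ) else 0)

theorem payoff_eq_expect_linearPayoff (m : ZMod d × X → ZMod d) (b : Y → ZMod d) :
    payoff d p c F m b = 𝔼 x0 : ZMod d, linearPayoff p c F (fun x => m (x0, x) - x0) b := by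
  have hoffset (x0 : ZMod d) (x : X) (y : Y) (f : ZMod d) :
      m (x0, x) + b y = x0 + f ↔ m (x0, x) - x0 + b y = f := by
    rw [sub_add_eq_add_sub, sub_eq_iff_eq_add']
  simp only [payoff, linearPayoff, hoffset, Fintype.expect_eq_sum_div_card, ZMod.card]
  ring

theorem payoff_linear (a : X → ZMod d) (b : Y → ZMod d) :
    payoff d p c F (fun z => z.1 + a z.2) b = linearPayoff p c F a b := by
  simp only [payoff_eq_expect_linearPayoff, add_sub_cancel_left, Fintype.expect_const]

end

theorem classical_bound_transfer_general (d : ℕ) [NeZero d] (X Y J : Type)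
    [Fintype X] [Fintype Y] [Fintype J]
    (p : X × Y → ℝ)
    (c : J × X × Y → ℝ) (F : J × X × Y → ZMod d)
    (B : ℝ)
    (hB : ∀ (a : X → ZMod d) (b : Y → ZMod d),
      payoff d p c F (fun z => z.1 + a z.2) b ≤ B) :
    ∀ (m : ZMod d × X → ZMod d) (b : Y → ZMod d), payoff d p c F m b ≤ B := by
  intro m b
  rw [payoff_eq_expect_linearPayoff]
  exact expect_le univ_nonempty fun x0 _ =>
    payoff_linear p c F _ b ▸ hB (fun x => m (x0, x) - x0) b

/-- Classical bound transfer: if `B` bounds the payoff of every linear strategy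
`m_a(x0, x) = x0 + a x` (the classical bound of the associated Bell inequality), then `B`
bounds the payoff of every classical strategy. -/
theorem classical_bound_transfer (d : ℕ) [NeZero d] (X Y J : Type)
    [Fintype X] [Fintype Y] [Fintype J]
    (p : X × Y → ℝ) (hp : ∀ xy, 0 ≤ p xy)
    (c : J × X × Y → ℝ) (F : J × X × Y → ZMod d)
    (B : ℝ)
    (hB : ∀ (a : X → ZMod d) (b : Y → ZMod d),
      payoff d p c F (fun z => z.1 + a z.2) b ≤ B) :
    ∀ (m : ZMod d × X → ZMod d) (b : Y → ZMod d), payoff d p c F m b ≤ B :=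
  classical_bound_transfer_general d X Y J p c F B hB
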